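/- arXiv:1912.07324 — 2 statements merged into one kernel-verified Lean document; each statement's English description precedes it below -/
import Mathlib

section
/- Let ι be a finite type, let ρ : (ι → ℝ) → ℝ be a vector of weights, and let S be a nonempty subset of ℤ≥0^ι. Then ρ attains a minimum on S: there exists σ₀ ∈ S such that ρ(σ₀) ≤ ρ(σ) for all σ ∈ S. -/
/-!
A weight vector is monotone, since `ρ τ - ρ σ = ρ (τ - σ) ≥ 0` for `σ ≤ τ`, so the `i`-th
coordinate of any `σ ≥ 0` is at most `ρ σ / ρ (eᵢ)`. Hence `ρ` has finite sublevel sets on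
`ℕ^ι`, i.e. it tends to infinity along the cofinite filter, and so attains a minimum on every
nonempty subset.
-/

/-- A vector of weights on `ℝ^ι`: a linear map `ρ : (ι → ℝ) → ℝ` with `ρ(σ) > 0`
for every nonzero `σ` with all coordinates nonnegative. -/
def IsWeightVector {ι : Type*} (ρ : (ι → ℝ) →ₗ[ℝ] ℝ) : Prop :=
  ∀ σ : ι → ℝ, (∀ i, 0 ≤ σ i) → σ ≠ 0 → 0 < ρ σ

open Filter

namespace IsWeightVector

variable {ι : Type*} {ρ : (ι → ℝ) →ₗ[ℝ] ℝ}

theorem nonneg (hρ : IsWeightVector ρ) {σ : ι → ℝ} (hσ : 0 ≤ σ) : 0 ≤ ρ σ := by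
  rcases eq_or_ne σ 0 with rfl | hne
  · simp
  · exact (hρ σ hσ hne).le

theorem monotone (hρ : IsWeightVector ρ) : Monotone ρ := fun σ τ h => by
  simpa using hρ.nonneg (sub_nonneg.mpr h)

theorem single_pos [DecidableEq ι] (hρ : IsWeightVector ρ) (i : ι) :
    0 < ρ (Pi.single i 1) := by
  have hnonneg : (0 : ι → ℝ) ≤ Pi.single i 1 := Pi.single_nonneg.mpr zero_le_one
  exact hρ _ hnonneg (by simp)

theorem mul_single_le [DecidableEq ι] (hρ : IsWeightVector ρ) {σ : ι → ℝ} (hσ : 0 ≤ σ)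
    (i : ι) : σ i * ρ (Pi.single i 1) ≤ ρ σ := by
  have hle : Pi.single i (σ i) ≤ σ := by
    intro j
    rcases eq_or_ne j i with rfl | hj
    · simp
    · simpa [hj] using hσ j
  calc σ i * ρ (Pi.single i 1) = ρ (Pi.single i (σ i)) := by
        rw [← smul_eq_mul, ← map_smul, ← Pi.single_smul', smul_eq_mul, mul_one]
    _ ≤ ρ σ := hρ.monotone hle

theorem finite_setOf_natCast_le [Finite ι] (hρ : IsWeightVector ρ) (c : ℝ) :
    {σ : ι → ℕ | ρ (fun i => (σ i : ℝ)) ≤ c}.Finite := by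
  classical
  refine (Set.Finite.pi fun i => Set.finite_Iic ⌈c / ρ (Pi.single i 1)⌉₊).subset ?_
  intro σ hσ i _
  have hi := (hρ.mul_single_le (fun j => Nat.cast_nonneg (σ j)) i).trans hσ
  exact Nat.cast_le.mp <| ((le_div_iff₀ (hρ.single_pos i)).mpr hi).trans (Nat.le_ceil _)

theorem tendsto_natCast_cofinite_atTop [Finite ι] (hρ : IsWeightVector ρ) :
    Tendsto (fun σ : ι → ℕ => ρ (fun i => (σ i : ℝ))) cofinite atTop :=
  tendsto_atTop.mpr fun c => eventually_cofinite.mpr <|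
    (hρ.finite_setOf_natCast_le c).subset fun _ h => (not_le.mp h).le

end IsWeightVector

/-- A vector of weights attains a minimum on every nonempty subset
`S ⊆ ℤ≥0^ι`. -/
theorem weight_attains_min_on_nonneg_lattice {ι : Type*} [Fintype ι]
    (ρ : (ι → ℝ) →ₗ[ℝ] ℝ) (hρ : IsWeightVector ρ)
    (S : Set (ι → ℕ)) (hS : S.Nonempty) :
    ∃ σ₀ ∈ S, ∀ σ ∈ S, ρ (fun i => (σ₀ i : ℝ)) ≤ ρ (fun i => (σ i : ℝ)) := by
  have := hS.to_subtype
  have htendsto : Tendsto (fun σ : S => ρ (fun i => (σ.1 i : ℝ))) cofinite atTop :=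
    hρ.tendsto_natCast_cofinite_atTop.comp Subtype.val_injective.tendsto_cofinite
  obtain ⟨⟨σ₀, hσ₀⟩, hmin⟩ := htendsto.exists_forall_le
  exact ⟨σ₀, hσ₀, fun σ hσ => hmin ⟨σ, hσ⟩⟩
end

section
/- Let ι be a finite type, S a nonempty subset of ℤ≥0^ι, and N(S) the associated Newton polyhedron. For vectors of weights ρ and ρ' on ℝ^ι, with ν = min{ρ(σ) : σ ∈ S}, ν' = min{ρ'(σ) : σ ∈ S}, F_ρ = {x ∈ N(S) : ρ(x) = ν} and F_{ρ'} = {x ∈ N(S) : ρ'(x) = ν'}, the following are equivalent: (i) F_ρ = F_{ρ'}; (ii) {σ ∈ S : ρ(σ) = ν} = {σ ∈ S : ρ'(σ) = ν'}. -/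
open Pointwise

/-- The Newton polyhedron of a set `S ⊆ ℤ≥0^ι`: the Minkowski sum of the convex
hull of `S` (viewed inside `ℝ^ι`) with the nonnegative orthant. -/
def newtonPolyhedron {ι : Type*} (S : Set (ι → ℕ)) : Set (ι → ℝ) :=
  convexHull ℝ ((fun σ : ι → ℕ => fun i => (σ i : ℝ)) '' S) + {x : ι → ℝ | ∀ i, 0 ≤ x i}

/-!
A weight vector is positive on the nonzero vectors of the orthant, so on `N(S)` it can only
attain its minimum `ν` on the convex hull of `S`. There, a linear functional bounded below by `ν`
on `S` attains `ν` exactly on the convex hull of the points of `S` where it equals `ν`. Hence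
`F_ρ` is the convex hull of `{σ ∈ S | ρ(σ) = ν}`, and conversely this set consists of the
points of `S` lying on `F_ρ`.
-/

section ConvexHull

variable {E : Type*} [AddCommGroup E] [Module ℝ E]

lemma convex_halfSpace_gt_union {g : E →ₗ[ℝ] ℝ} {ν : ℝ} {C : Set E} (hC : Convex ℝ C)
    (hCν : ∀ p ∈ C, ν ≤ g p) : Convex ℝ ({p | ν < g p} ∪ C) := by
  have mixed : ∀ ⦃x y : E⦄ ⦃a b : ℝ⦄, ν < g x → y ∈ C → 0 ≤ a → 0 ≤ b → a + b = 1 →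
      a • x + b • y ∈ {p | ν < g p} ∪ C := by
    intro x y a b hx hy ha hb hab
    rcases ha.eq_or_lt with rfl | ha
    · right
      simpa [show b = 1 by linarith] using hy
    · left
      have hsplit : a * ν + b * ν = ν := by rw [← add_mul, hab, one_mul]
      show ν < g (a • x + b • y)
      rw [map_add, map_smul, map_smul, smul_eq_mul, smul_eq_mul]
      linarith [mul_lt_mul_of_pos_left hx ha, mul_le_mul_of_nonneg_left (hCν y hy) hb]
  rintro x (hx | hx) y (hy | hy) a b ha hb hab
  · exact Or.inl (convex_halfSpace_gt g.isLinear ν hx hy ha hb hab)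
  · exact mixed hx hy ha hb hab
  · rw [add_comm]
    exact mixed hy hx hb ha (by linarith)
  · exact Or.inr (hC hx hy ha hb hab)

lemma sep_convexHull_eq_convexHull_sep {g : E →ₗ[ℝ] ℝ} {ν : ℝ} {s : Set E}
    (hs : ∀ p ∈ s, ν ≤ g p) :
    {y ∈ convexHull ℝ s | g y = ν} = convexHull ℝ {p ∈ s | g p = ν} := by
  apply subset_antisymm
  · rintro y ⟨hy, hgy⟩
    -- `s` lies in the convex set `{ν < g} ∪ convexHull {p ∈ s | g p = ν}`, hence so does `y`.
    have hcover : s ⊆ {p | ν < g p} ∪ convexHull ℝ {p ∈ s | g p = ν} := fun p hp =>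
      (hs p hp).lt_or_eq.imp id fun h => subset_convexHull ℝ _ ⟨hp, h.symm⟩
    have hconvex := convex_halfSpace_gt_union (convex_convexHull ℝ {p ∈ s | g p = ν})
      fun p hp => convexHull_min (fun q hq => hq.2.ge) (convex_halfSpace_ge g.isLinear ν) hp
    rcases convexHull_min hcover hconvex hy with hlt | hmem
    · exact absurd hgy (ne_of_gt hlt)
    · exact hmem
  · exact convexHull_min (fun p hp => ⟨subset_convexHull ℝ s hp.1, hp.2⟩)
      ((convex_convexHull ℝ s).inter (convex_hyperplane g.isLinear ν))

end ConvexHull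

lemma IsWeightVector.eq_zero_of_apply_nonpos {ι : Type*} {ρ : (ι → ℝ) →ₗ[ℝ] ℝ}
    (hρ : IsWeightVector ρ) {z : ι → ℝ} (hz : ∀ i, 0 ≤ z i) (hρz : ρ z ≤ 0) : z = 0 := by
  by_contra hz0
  exact (hρ z hz hz0).not_ge hρz

section NewtonPolyhedron

variable {ι : Type*} {S : Set (ι → ℕ)}

lemma natCast_mem_newtonPolyhedron {σ : ι → ℕ} (hσ : σ ∈ S) :
    (fun i => (σ i : ℝ)) ∈ newtonPolyhedron S :=
  ⟨_, subset_convexHull ℝ _ ⟨σ, hσ, rfl⟩, 0, fun _ => le_rfl, add_zero _⟩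

lemma sep_eq_sep_mem_newtonPolyhedron_face (ρ : (ι → ℝ) →ₗ[ℝ] ℝ) (ν : ℝ) :
    {σ ∈ S | ρ (fun i => (σ i : ℝ)) = ν} =
      {σ ∈ S | (fun i => (σ i : ℝ)) ∈ {x ∈ newtonPolyhedron S | ρ x = ν}} := by
  ext σ
  exact ⟨fun ⟨hσ, h⟩ => ⟨hσ, natCast_mem_newtonPolyhedron hσ, h⟩, fun ⟨hσ, _, h⟩ => ⟨hσ, h⟩⟩

lemma IsWeightVector.newtonPolyhedron_face_eq_convexHull {ρ : (ι → ℝ) →ₗ[ℝ] ℝ}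
    (hρ : IsWeightVector ρ) {ν : ℝ} (hν : ∀ σ ∈ S, ν ≤ ρ (fun i => (σ i : ℝ))) :
    {x ∈ newtonPolyhedron S | ρ x = ν} =
      convexHull ℝ
        ((fun σ : ι → ℕ => fun i => (σ i : ℝ)) '' {σ ∈ S | ρ (fun i => (σ i : ℝ)) = ν}) := by
  have hlb : ∀ p ∈ (fun σ : ι → ℕ => fun i => (σ i : ℝ)) '' S, ν ≤ ρ p := by
    rintro _ ⟨σ, hσ, rfl⟩
    exact hν σ hσ
  have himage :
      (fun σ : ι → ℕ => fun i => (σ i : ℝ)) '' {σ ∈ S | ρ (fun i => (σ i : ℝ)) = ν} =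
        {p ∈ (fun σ : ι → ℕ => fun i => (σ i : ℝ)) '' S | ρ p = ν} :=
    Set.image_inter_preimage _ S {p | ρ p = ν}
  rw [himage, ← sep_convexHull_eq_convexHull_sep hlb]
  ext x
  constructor
  · rintro ⟨⟨y, hy, z, hz, rfl⟩, hx⟩
    have hνy : ν ≤ ρ y := convexHull_min hlb (convex_halfSpace_ge ρ.isLinear ν) hy
    obtain rfl : z = 0 := hρ.eq_zero_of_apply_nonpos hz (by rw [map_add] at hx; linarith)
    simpa using And.intro hy hx
  · rintro ⟨hx, hρx⟩
    exact ⟨⟨x, hx, 0, fun _ => le_rfl, add_zero x⟩, hρx⟩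

end NewtonPolyhedron

theorem face_eq_iff_min_points_eq_general {ι : Type*}
    (ρ ρ' : (ι → ℝ) →ₗ[ℝ] ℝ) (hρ : IsWeightVector ρ) (hρ' : IsWeightVector ρ')
    (S : Set (ι → ℕ)) (ν ν' : ℝ)
    (hν : IsLeast ((fun σ : ι → ℕ => ρ (fun i => (σ i : ℝ))) '' S) ν)
    (hν' : IsLeast ((fun σ : ι → ℕ => ρ' (fun i => (σ i : ℝ))) '' S) ν') :
    {x ∈ newtonPolyhedron S | ρ x = ν} = {x ∈ newtonPolyhedron S | ρ' x = ν'} ↔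
      {σ ∈ S | ρ (fun i => (σ i : ℝ)) = ν} = {σ ∈ S | ρ' (fun i => (σ i : ℝ)) = ν'} := by
  constructor
  · intro h
    rw [sep_eq_sep_mem_newtonPolyhedron_face ρ ν, sep_eq_sep_mem_newtonPolyhedron_face ρ' ν', h]
  · intro h
    rw [hρ.newtonPolyhedron_face_eq_convexHull fun σ hσ => hν.2 ⟨σ, hσ, rfl⟩,
      hρ'.newtonPolyhedron_face_eq_convexHull fun σ hσ => hν'.2 ⟨σ, hσ, rfl⟩, h]

/-- For vectors of weights `ρ, ρ'` with respective minima `ν, ν'`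
on `S`, the faces `F_ρ` and `F_{ρ'}` of `N(S)` coincide iff the sets of points
of `S` where the minima are attained coincide. -/
theorem face_eq_iff_min_points_eq {ι : Type*} [Fintype ι]
    (ρ ρ' : (ι → ℝ) →ₗ[ℝ] ℝ) (hρ : IsWeightVector ρ) (hρ' : IsWeightVector ρ')
    (S : Set (ι → ℕ)) (hS : S.Nonempty) (ν ν' : ℝ)
    (hν : IsLeast ((fun σ : ι → ℕ => ρ (fun i => (σ i : ℝ))) '' S) ν)
    (hν' : IsLeast ((fun σ : ι → ℕ => ρ' (fun i => (σ i : ℝ))) '' S) ν') :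
    {x ∈ newtonPolyhedron S | ρ x = ν} = {x ∈ newtonPolyhedron S | ρ' x = ν'} ↔
      {σ ∈ S | ρ (fun i => (σ i : ℝ)) = ν} = {σ ∈ S | ρ' (fun i => (σ i : ℝ)) = ν'} :=
  face_eq_iff_min_points_eq_general ρ ρ' hρ hρ' S ν ν' hν hν'
end
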